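/- Let G be an Eulerian graph containing a degree-2 vertex v with non-adjacent neighbours x1 and x2. If G − v + x1x2 has a legal colouring using at most ⌊(|V(G)|−1)/2⌋ colours, then G has a cycle decomposition into at most ⌊(|V(G)|−1)/2⌋ cycles. -/

import Mathlib

open SimpleGraph

def IsCycleEdgeSet {V : Type*} (G : SimpleGraph V) (s : Set (Sym2 V)) : Prop :=
  ∃ (v : V) (w : G.Walk v v), w.IsCycle ∧ s = {e | e ∈ w.edges}

def HasCycleDecompLE {V : Type*} (G : SimpleGraph V) (m : ℕ) : Prop :=
  ∃ (n : ℕ) (f : Fin n → Set (Sym2 V)), n ≤ m ∧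
    (∀ i, IsCycleEdgeSet G (f i)) ∧
    (Pairwise fun i j => Disjoint (f i) (f j)) ∧
    (⋃ i, f i) = G.edgeSet

def IsLegalColouringWith {V : Type*} (G : SimpleGraph V) (c : Sym2 V → ℕ) (m : ℕ) : Prop :=
  (∀ e ∈ G.edgeSet, 1 ≤ c e ∧ c e ≤ m) ∧
  ∀ i : ℕ, ({e ∈ G.edgeSet | c e = i}).Nonempty → IsCycleEdgeSet G {e ∈ G.edgeSet | c e = i}

def IsLegalColouring {V : Type*} [Fintype V] (G : SimpleGraph V) (c : Sym2 V → ℕ) : Prop :=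
  IsLegalColouringWith G c ((Fintype.card V - 1) / 2)

/-!
The nonempty colour classes of a legal colouring of `G - v + x₁x₂` form a decomposition of that
graph into at most as many cycles as there are colours. Exactly one of these cycles uses the new
edge `x₁x₂`; since `v` is isolated in `G - v + x₁x₂`, replacing that edge by the path `x₁ v x₂`
gives a cycle of `G`, and the other cycles are cycles of `G` already. Because `x₁x₂` is not an edge
of `G`, this is a cycle decomposition of `G` with the same number of cycles.
-/

namespace SimpleGraph

variable {V : Type*} {G H : SimpleGraph V}

namespace Walk

theorem IsCycle.eq_snd_or_eq_penultimate_of_mem_edges {x y : V} {c : H.Walk x x}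
    (hc : c.IsCycle) (he : s(x, y) ∈ c.edges) : y = c.snd ∨ y = c.penultimate := by
  cases c with
  | nil => exact absurd hc not_isCycle_nil
  | cons h q =>
    rw [edges_cons, List.mem_cons] at he
    rcases he with he | he
    · rcases Sym2.eq_iff.mp he with ⟨-, rfl⟩ | ⟨rfl, -⟩
      · exact .inl (snd_cons q h).symm
      · exact absurd rfl h.ne
    · have hq := ((cons_isCycle_iff q h).mp hc).1
      have hnil : ¬q.Nil := edges_eq_nil.not.mp (List.ne_nil_of_mem he)
      rw [penultimate_cons_of_not_nil h q hnil]
      exact .inr (hq.eq_penultimate_of_mem_edges he)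

theorem IsCycle.exists_isPath_of_mem_edges {x y : V} {c : H.Walk x x} (hc : c.IsCycle)
    (he : s(x, y) ∈ c.edges) :
    ∃ p : H.Walk y x, p.IsPath ∧ s(x, y) ∉ p.edges ∧
      {e | e ∈ c.edges} = insert s(x, y) {e | e ∈ p.edges} := by
  obtain ⟨c', hc', hce, hsnd⟩ : ∃ c' : H.Walk x x, c'.IsCycle ∧
      (∀ e, e ∈ c'.edges ↔ e ∈ c.edges) ∧ c'.snd = y := by
    rcases hc.eq_snd_or_eq_penultimate_of_mem_edges he with rfl | rfl
    · exact ⟨c, hc, fun _ => Iff.rfl, rfl⟩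
    · exact ⟨c.reverse, hc.reverse, by simp [edges_reverse], snd_reverse c⟩
  cases c' with
  | nil => exact absurd hc' not_isCycle_nil
  | cons h q =>
    rw [snd_cons] at hsnd
    subst hsnd
    obtain ⟨hq, hxy⟩ := (cons_isCycle_iff q h).mp hc'
    exact ⟨q, hq, hxy, by ext; simp [← hce]⟩

end Walk

theorem IsCycleEdgeSet.subset_edgeSet {s : Set (Sym2 V)} (hs : IsCycleEdgeSet G s) :
    s ⊆ G.edgeSet := by
  obtain ⟨u, c, -, rfl⟩ := hs
  exact fun e he => c.edges_subset_edgeSet he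

theorem IsCycleEdgeSet.of_subset_edgeSet {s : Set (Sym2 V)} (hs : IsCycleEdgeSet H s)
    (hsG : s ⊆ G.edgeSet) : IsCycleEdgeSet G s := by
  obtain ⟨u, c, hc, rfl⟩ := hs
  exact ⟨u, c.transfer G (fun e he => hsG he), hc.transfer _, by simp [Walk.edges_transfer]⟩

theorem IsCycleEdgeSet.exists_isPath_of_mem {s : Set (Sym2 V)} {x y : V}
    (hs : IsCycleEdgeSet H s) (hxy : s(x, y) ∈ s) :
    ∃ p : H.Walk y x, p.IsPath ∧ s(x, y) ∉ p.edges ∧ s = insert s(x, y) {e | e ∈ p.edges} := by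
  classical
  obtain ⟨u, c, hc, rfl⟩ := hs
  have hx : x ∈ c.support := c.fst_mem_support_of_mem_edges hxy
  have hrot : ∀ e, e ∈ (c.rotate x hx).edges ↔ e ∈ c.edges :=
    fun e => (c.rotate_edges x hx).mem_iff
  obtain ⟨p, hp, hxyp, hpc⟩ :=
    (hc.rotate hx).exists_isPath_of_mem_edges ((hrot _).mpr hxy)
  exact ⟨p, hp, hxyp, by simpa [hrot] using hpc⟩

theorem IsCycleEdgeSet.subdivide {s : Set (Sym2 V)} {v x y : V} (hs : IsCycleEdgeSet H s)
    (hxy : s(x, y) ∈ s) (hv : ∀ e ∈ s, v ∉ e) (hsG : s \ {s(x, y)} ⊆ G.edgeSet)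
    (hvx : G.Adj v x) (hvy : G.Adj v y) :
    IsCycleEdgeSet G (s \ {s(x, y)} ∪ {s(v, x), s(v, y)}) := by
  have hne : x ≠ y := H.ne_of_adj (hs.subset_edgeSet hxy)
  obtain ⟨p, hp, hxyp, rfl⟩ := hs.exists_isPath_of_mem hxy
  have hpG : ∀ e ∈ p.edges, e ∈ G.edgeSet := fun e he =>
    hsG ⟨Set.mem_insert_of_mem _ he, fun h => hxyp (h ▸ he)⟩
  have hvp : v ∉ p.support := by
    rw [Walk.mem_support_iff_exists_mem_edges]
    rintro (rfl | ⟨e, he, hve⟩)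
    · exact hv _ (Set.mem_insert _ _) (Sym2.mem_mk_left _ _)
    · exact hv e (Set.mem_insert_of_mem _ he) hve
  refine ⟨v, .cons hvy ((p.transfer G hpG).concat hvx.symm), ?_, ?_⟩
  · refine (Walk.cons_isCycle_iff _ _).mpr ⟨(hp.transfer hpG).concat ?_ _, ?_⟩
    · rwa [Walk.support_transfer]
    · rw [Walk.edges_concat, Walk.edges_transfer, List.concat_eq_append, List.mem_append,
        List.mem_singleton]
      rintro (h | h)
      · exact hvp (p.fst_mem_support_of_mem_edges h)
      · rcases Sym2.eq_iff.mp h with ⟨rfl, -⟩ | ⟨-, rfl⟩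
        · exact hvx.ne rfl
        · exact hne rfl
  · ext e
    have hxye : e ∈ p.edges → e ≠ s(x, y) := fun he h => hxyp (h ▸ he)
    simp only [Walk.edges_cons, Walk.edges_concat, Walk.edges_transfer, List.concat_eq_append,
      List.mem_cons, List.mem_append, Set.mem_ofPred_eq, Set.mem_union,
      Set.mem_sdiff, Set.mem_insert_iff, Set.mem_singleton_iff, Sym2.eq_swap (a := x) (b := v)]
    tauto

theorem eq_or_eq_of_neighborSet_eq_pair {v x y : V} {e : Sym2 V}
    (hN : G.neighborSet v = {x, y}) (he : e ∈ G.edgeSet) (hve : v ∈ e) :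
    e = s(v, x) ∨ e = s(v, y) := by
  obtain ⟨w, rfl⟩ := Sym2.mem_iff_exists.mp hve
  have hw : w ∈ G.neighborSet v := he
  rw [hN] at hw
  rcases hw with rfl | rfl <;> simp

theorem HasCycleDecompLE.of_finset {ι : Type*} {m : ℕ} (t : Finset ι) (f : ι → Set (Sym2 V))
    (ht : t.card ≤ m) (hcyc : ∀ i ∈ t, (f i).Nonempty → IsCycleEdgeSet G (f i))
    (hdisj : (t : Set ι).PairwiseDisjoint f) (hcover : ⋃ i ∈ t, f i = G.edgeSet) :
    HasCycleDecompLE G m := by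
  classical
  set T := t.filter fun i => (f i).Nonempty
  have hT : ∀ i : T, (i : ι) ∈ t ∧ (f i).Nonempty := fun i => Finset.mem_filter.mp i.2
  refine ⟨T.card, fun k => f (T.equivFin.symm k), (Finset.card_filter_le _ _).trans ht,
    fun k => hcyc _ (hT _).1 (hT _).2, fun k l hkl => ?_, ?_⟩
  · refine hdisj (hT _).1 (hT _).1 fun h => hkl ?_
    exact T.equivFin.symm.injective (Subtype.ext h)
  · rw [← hcover]
    ext e
    simp only [Set.mem_iUnion]
    constructor
    · rintro ⟨k, hk⟩
      exact ⟨_, (hT _).1, hk⟩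
    · rintro ⟨i, hi, he⟩
      have hiT : i ∈ T := Finset.mem_filter.mpr ⟨hi, e, he⟩
      exact ⟨T.equivFin ⟨i, hiT⟩, by simpa using he⟩

theorem IsLegalColouringWith.hasCycleDecompLE {c : Sym2 V → ℕ} {m : ℕ}
    (hc : IsLegalColouringWith G c m) : HasCycleDecompLE G m := by
  refine .of_finset (Finset.Icc 1 m) (fun i => {e ∈ G.edgeSet | c e = i}) (by simp)
    (fun i _ => hc.2 i) (fun i _ j _ hij => ?_) ?_
  · exact Set.disjoint_left.mpr fun e hei hej => hij (hei.2.symm.trans hej.2)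
  · ext e
    simp only [Set.mem_iUnion, Finset.mem_Icc]
    exact ⟨fun ⟨_, _, he⟩ => he.1, fun he => ⟨c e, hc.1 e he, he, rfl⟩⟩

theorem HasCycleDecompLE.of_subdivide {m : ℕ} {v x y : V} (hH : HasCycleDecompLE H m)
    (hxy : s(x, y) ∈ H.edgeSet) (hv : ∀ e ∈ H.edgeSet, v ∉ e)
    (hG : G.edgeSet = H.edgeSet \ {s(x, y)} ∪ {s(v, x), s(v, y)}) :
    HasCycleDecompLE G m := by
  classical
  obtain ⟨n, f, hn, hcyc, hdisj, hcover⟩ := hH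
  have hvx : G.Adj v x := by rw [← mem_edgeSet, hG]; simp
  have hvy : G.Adj v y := by rw [← mem_edgeSet, hG]; simp
  have hfH : ∀ i, f i ⊆ H.edgeSet := fun i => hcover ▸ Set.subset_iUnion f i
  have hfG : ∀ i, f i \ {s(x, y)} ⊆ G.edgeSet := fun i => by
    rw [hG]; exact (Set.sdiff_subset_sdiff_left (hfH i)).trans Set.subset_union_left
  have hvf : ∀ i, s(v, x) ∉ f i ∧ s(v, y) ∉ f i := fun i =>
    ⟨fun h => hv _ (hfH i h) (Sym2.mem_mk_left _ _),
      fun h => hv _ (hfH i h) (Sym2.mem_mk_left _ _)⟩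
  refine ⟨n, fun i => if s(x, y) ∈ f i then f i \ {s(x, y)} ∪ {s(v, x), s(v, y)} else f i, hn,
    fun i => ?_, fun i j hij => ?_, ?_⟩
  · dsimp only
    split_ifs with h
    · exact (hcyc i).subdivide h (fun e he => hv e (hfH i he)) (hfG i) hvx hvy
    · exact (hcyc i).of_subset_edgeSet fun e he => hfG i ⟨he, fun h' => h (h' ▸ he)⟩
  · have hfij := Set.disjoint_left.mp (hdisj hij)
    have hi := hvf i
    have hj := hvf j
    dsimp only
    rw [Set.disjoint_left]
    split_ifs with h1 h2 h2 <;> grind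
  · rw [hG, ← hcover]
    ext e
    obtain ⟨k, hk⟩ := Set.mem_iUnion.mp (hcover ▸ hxy)
    simp only [Set.mem_iUnion, Set.mem_union, Set.mem_sdiff, Set.mem_insert_iff,
      Set.mem_singleton_iff]
    constructor
    · rintro ⟨i, he⟩
      split_ifs at he <;> grind
    · rintro (⟨⟨i, he⟩, hne⟩ | he)
      · exact ⟨i, by split_ifs <;> simp [he, hne]⟩
      · exact ⟨k, by simp only [if_pos hk]; tauto⟩

end SimpleGraph

theorem stmt_15_general {V : Type*} [Fintype V] (G : SimpleGraph V) (v x1 x2 : V)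
    (hx : x1 ≠ x2) (hN : G.neighborSet v = {x1, x2}) (hnadj : ¬ G.Adj x1 x2)
    (hcol : ∃ c : Sym2 V → ℕ,
      IsLegalColouringWith
        (SimpleGraph.fromEdgeSet ((G.edgeSet \ {s(v, x1), s(v, x2)}) ∪ {s(x1, x2)})) c
        ((Fintype.card V - 1) / 2)) :
    HasCycleDecompLE G ((Fintype.card V - 1) / 2) := by
  obtain ⟨c, hc⟩ := hcol
  have hvx1 : G.Adj v x1 := by rw [← mem_neighborSet, hN]; simp
  have hvx2 : G.Adj v x2 := by rw [← mem_neighborSet, hN]; simp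
  refine hc.hasCycleDecompLE.of_subdivide (v := v) (x := x1) (y := x2) ?_ ?_ ?_
  · simp [edgeSet_fromEdgeSet, hx]
  · rw [edgeSet_fromEdgeSet]
    rintro e ⟨⟨he, hne⟩ | rfl, -⟩ hve
    · exact hne (eq_or_eq_of_neighborSet_eq_pair hN he hve)
    · simp [hvx1.ne, hvx2.ne] at hve
  · ext e
    have hdiag : e ∈ G.edgeSet → ¬e.IsDiag := G.not_isDiag_of_mem_edgeSet
    have hne : e ∈ G.edgeSet → e ≠ s(x1, x2) := fun he h => hnadj (by rwa [h] at he)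
    have hv1 : s(v, x1) ∈ G.edgeSet := hvx1
    have hv2 : s(v, x2) ∈ G.edgeSet := hvx2
    simp only [edgeSet_fromEdgeSet, Set.mem_union, Set.mem_sdiff, Set.mem_insert_iff,
      Set.mem_singleton_iff, Sym2.mem_diagSet]
    grind

theorem stmt_15 {V : Type*} [Fintype V] (G : SimpleGraph V) (v x1 x2 : V)
    (hEuler : ∀ w : V, Even ((G.neighborSet w).ncard))
    (hx : x1 ≠ x2) (hN : G.neighborSet v = {x1, x2}) (hnadj : ¬ G.Adj x1 x2)
    (hcol : ∃ c : Sym2 V → ℕ,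
      IsLegalColouringWith
        (SimpleGraph.fromEdgeSet ((G.edgeSet \ {s(v, x1), s(v, x2)}) ∪ {s(x1, x2)})) c
        ((Fintype.card V - 1) / 2)) :
    HasCycleDecompLE G ((Fintype.card V - 1) / 2) :=
  stmt_15_general G v x1 x2 hx hN hnadj hcol
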